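/- Let m ≥ 1 and let ν be a partition of n ≥ 1 with conjugate ν', largest part ℓ = ν_1, and exactly k nonzero parts. For 1 ≤ i ≤ ℓ let P_i be the set family { {1, 2, …, m−1} ∪ {m−1+j} : 1 ≤ j ≤ ν'_i }. Then (P_1,…,P_ℓ) is a closed set family tuple with each P_i of shape (m^{ν'_i}); its type λ is defined and its conjugate is λ' = (n^{m−1}, ν_1, ν_2, …, ν_k), i.e. the total number of sets containing x is n for 1 ≤ x ≤ m−1 and is ν_j for x = m−1+j with 1 ≤ j ≤ k. Moreover, for every set family tuple (R_1,…,R_ℓ) with each R_i of shape (m^{ν'_i}) whose type μ is defined, the conjugate μ' is lexicographically at most (n^{m−1}, ν_1, ν_2, …, ν_k). -/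

import Mathlib

/-- The multiplicity of `i` in a set family `P`: the number of sets in `P` containing `i`. -/
def famMult (P : Finset (Finset ℕ)) (i : ℕ) : ℕ := (P.filter fun S => i ∈ S).card

/-- `P` is a set family of shape `(m^n)`: a collection of `n` distinct `m`-subsets of
the positive integers. -/
def IsSetFamily (m n : ℕ) (P : Finset (Finset ℕ)) : Prop :=
  P.card = n ∧ ∀ S ∈ P, S.card = m ∧ ∀ x ∈ S, 1 ≤ x

/-- `B` majorizes `A` (written `A ⪯ B`): the `r`-th smallest element of `A` is at most
the `r`-th smallest element of `B` (the sets in question have the same cardinality). -/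
def SetMaj (A B : Finset ℕ) : Prop :=
  ∀ r : ℕ, (A.sort (· ≤ ·)).getD r 0 ≤ (B.sort (· ≤ ·)).getD r 0

/-- A set family (of `m`-subsets) is closed if it is downward closed under majorization. -/
def ClosedFam (m : ℕ) (P : Finset (Finset ℕ)) : Prop :=
  ∀ B ∈ P, ∀ A : Finset ℕ, A.card = m → (∀ x ∈ A, 1 ≤ x) → SetMaj A B → A ∈ P

/-- The type of a family (or tuple) whose multiplicity function is `f` is defined exactly
when `f` is weakly decreasing on the positive integers; then `f` is the conjugate `λ'`
of the type `λ`. -/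
def TypeDefined (f : ℕ → ℕ) : Prop := ∀ i j : ℕ, 1 ≤ i → i ≤ j → f j ≤ f i

/-- The sum of the first `j` parts of the partition `λ` whose conjugate is `f`:
`λ_1 + ⋯ + λ_j = Σ_x min (λ'_x) j`. -/
noncomputable def partSum (f : ℕ → ℕ) (j : ℕ) : ℕ := ∑ᶠ x, min (f x) j

/-- Dominance order: the partition with conjugate `g` is dominated (`⊴`) by the partition
with conjugate `f`. -/
def ConjDom (g f : ℕ → ℕ) : Prop := ∀ j : ℕ, partSum g j ≤ partSum f j

/-- Strict dominance `⊲` of the partition with conjugate `g` by the one with conjugate `f`. -/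
def ConjStrictDom (g f : ℕ → ℕ) : Prop := ConjDom g f ∧ ∃ i : ℕ, 1 ≤ i ∧ g i ≠ f i

/-- The total multiplicity of `i` over a tuple of set families. -/
def tupMult {k : ℕ} (P : Fin k → Finset (Finset ℕ)) (i : ℕ) : ℕ := ∑ j, famMult (P j) i

/-- The conjugate of the partition `ν` (with at most `k` parts): `ν'_i = #{j ≤ k : ν_j ≥ i}`. -/
def nuConj (k : ℕ) (nu : ℕ → ℕ) (i : ℕ) : ℕ := ((Finset.Icc 1 k).filter fun j => i ≤ nu j).card

/-- The set family `{ {1,…,m-1} ∪ {m-1+j} : 1 ≤ j ≤ c }`. -/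
def hookFam (m c : ℕ) : Finset (Finset ℕ) :=
  (Finset.Icc 1 c).image fun j => insert (m - 1 + j) (Finset.Icc 1 (m - 1))

/-- The total multiplicity of `x` over the tuple `(P_1, …, P_ℓ)`. -/
def tupMultIcc (l : ℕ) (P : ℕ → Finset (Finset ℕ)) (x : ℕ) : ℕ :=
  ∑ i ∈ Finset.Icc 1 l, famMult (P i) x

/-! The hook tuple has multiplicity `n = Σ ν'_i` at every `x ≤ m - 1` and, since the set
`{1, …, m - 1, m - 1 + j}` lies in `P_i` exactly when `j ≤ ν'_i`, multiplicity `ν_j` at `m - 1 + j`.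

For the lexicographic bound, look at the first position `j` where a competing tuple `R` differs.
If `j ≤ m - 1`, its multiplicity there is at most the total number `n` of sets. Otherwise `R` has
multiplicity `n` at every `x ≤ m - 1`, so every set of `R` contains `{1, …, m - 1}` and is
determined by its single element `≥ m`. Then `R_i` contributes at most `min (ν'_i, t)` to the
multiplicities at `m, …, m - 1 + t`, and summing over `i` bounds their total by
`Σ_i min (ν'_i, t) = ν_1 + ⋯ + ν_t`; agreement below `j = m - 1 + t` leaves `≤ ν_t` at `j`. -/
open Finset

lemma List.add_le_getD_of_pairwise_lt {c : ℕ} {l : List ℕ} (hl : l.Pairwise (· < ·))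
    (hc : ∀ x ∈ l, c ≤ x) {r : ℕ} (hr : r < l.length) : c + r ≤ l.getD r 0 := by
  induction l generalizing c r with
  | nil => simp at hr
  | cons a t ih =>
    obtain ⟨ha, ht⟩ := List.pairwise_cons.1 hl
    cases r with
    | zero => simpa using hc a (by simp)
    | succ r =>
      have := ih ht (c := c + 1) (fun x hx => (hc a (by simp)).trans_lt (ha x hx))
        (r := r) (by simpa using hr)
      simpa [Nat.add_assoc, Nat.add_comm 1] using this

lemma Finset.add_one_le_sort_getD {A : Finset ℕ} (hA : ∀ x ∈ A, 1 ≤ x) {r : ℕ} (hr : r < #A) :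
    r + 1 ≤ (A.sort (· ≤ ·)).getD r 0 := by
  have := List.add_le_getD_of_pairwise_lt (List.sortedLT_iff_pairwise.1 (sortedLT_sort A))
    (fun x hx => hA x ((mem_sort _).1 hx)) (r := r) (by simpa using hr)
  omega

lemma Finset.sort_getD_mem {A : Finset ℕ} {r : ℕ} (hr : r < #A) :
    (A.sort (· ≤ ·)).getD r 0 ∈ A := by
  have hr' : r < (A.sort (· ≤ ·)).length := by simpa using hr
  rw [List.getD_eq_getElem _ _ hr']
  exact (mem_sort _).1 (List.getElem_mem hr')

section Hook

variable {m : ℕ}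

lemma card_insert_Icc {y : ℕ} (hm : 1 ≤ m) (hy : m ≤ y) : #(insert y (Icc 1 (m - 1))) = m := by
  rw [card_insert_of_notMem (by simp only [mem_Icc]; omega), Nat.card_Icc]
  omega

lemma eq_insert_Icc_of_subset {S : Finset ℕ} {y : ℕ} (hS : #S = m) (hbase : Icc 1 (m - 1) ⊆ S)
    (hy : m ≤ y) (hyS : y ∈ S) : S = insert y (Icc 1 (m - 1)) := by
  have hm : 1 ≤ m := hS ▸ card_pos.2 ⟨y, hyS⟩
  refine (eq_of_subset_of_card_le (insert_subset hyS hbase) ?_).symm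
  rw [card_insert_Icc hm hy, hS]

lemma sort_insert_Icc {y : ℕ} (hy : m ≤ y) :
    (insert y (Icc 1 (m - 1))).sort (· ≤ ·) = List.range' 1 (m - 1) ++ [y] := by
  have hmem : ∀ a ∈ List.range' 1 (m - 1), a < y := fun a ha => by
    have := List.mem_range'_1.1 ha; omega
  have hnd : (List.range' 1 (m - 1) ++ [y]).Nodup :=
    (List.nodup_range' ..).append (List.nodup_singleton y)
      (fun a ha hb => by simp only [List.mem_singleton] at hb; exact (hmem a ha).ne hb)
  have hset : (List.range' 1 (m - 1) ++ [y]).toFinset = insert y (Icc 1 (m - 1)) := by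
    ext x
    simp only [List.toFinset_append, mem_union, List.mem_toFinset, List.mem_range'_1,
      List.toFinset_cons, List.toFinset_nil, insert_empty_eq, mem_singleton, mem_insert, mem_Icc]
    omega
  rw [← hset, List.toFinset_sort _ hnd, List.pairwise_append]
  exact ⟨(List.pairwise_lt_range' ..).imp le_of_lt, by simp,
    fun a ha b hb => by simp only [List.mem_singleton] at hb; exact hb ▸ (hmem a ha).le⟩

lemma mem_hookFam {c : ℕ} {S : Finset ℕ} :
    S ∈ hookFam m c ↔ ∃ j, (1 ≤ j ∧ j ≤ c) ∧ S = insert (m - 1 + j) (Icc 1 (m - 1)) := by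
  simp [hookFam, eq_comm]

lemma getD_sort_insert_Icc_of_lt {y r : ℕ} (hy : m ≤ y) (hr : r < m - 1) :
    ((insert y (Icc 1 (m - 1))).sort (· ≤ ·)).getD r 0 = r + 1 := by
  rw [sort_insert_Icc hy]
  simp [List.getD_eq_getElem?_getD, List.getElem?_append, hr]
  omega

lemma getD_sort_insert_Icc_sub_one {y : ℕ} (hy : m ≤ y) :
    ((insert y (Icc 1 (m - 1))).sort (· ≤ ·)).getD (m - 1) 0 = y := by
  rw [sort_insert_Icc hy]
  simp [List.getD_eq_getElem?_getD]

lemma card_hookFam (c : ℕ) : #(hookFam m c) = c := by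
  rw [hookFam, card_image_of_injOn, Nat.card_Icc, Nat.add_sub_cancel]
  intro a ha b hb hab
  simp only [coe_Icc, Set.mem_Icc] at ha hb
  have : m - 1 + a ∈ insert (m - 1 + b) (Icc 1 (m - 1)) := by
    simp only at hab; exact hab ▸ mem_insert_self _ _
  simp only [mem_insert, mem_Icc] at this
  omega

lemma isSetFamily_hookFam (hm : 1 ≤ m) (c : ℕ) : IsSetFamily m c (hookFam m c) := by
  refine ⟨card_hookFam c, fun S hS => ?_⟩
  obtain ⟨j, ⟨hj, -⟩, rfl⟩ := mem_hookFam.1 hS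
  refine ⟨card_insert_Icc hm (by omega), fun x hx => ?_⟩
  simp only [mem_insert, mem_Icc] at hx
  omega

lemma closedFam_hookFam (hm : 1 ≤ m) (c : ℕ) : ClosedFam m (hookFam m c) := by
  intro B hB A hA hApos hmaj
  obtain ⟨j, hj, rfl⟩ := mem_hookFam.1 hB
  -- the `r`-th smallest element of `A` is squeezed between `r + 1` and that of the hook set
  have hlow : ∀ r < m, r + 1 ≤ (A.sort (· ≤ ·)).getD r 0 := fun r hr =>
    add_one_le_sort_getD hApos (hA ▸ hr)
  have hbase : Icc 1 (m - 1) ⊆ A := fun x hx => by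
    rw [mem_Icc] at hx
    have hup := hmaj (x - 1)
    rw [getD_sort_insert_Icc_of_lt (by omega) (by omega)] at hup
    have hx : (A.sort (· ≤ ·)).getD (x - 1) 0 = x := by have := hlow (x - 1) (by omega); omega
    exact hx ▸ sort_getD_mem (by omega)
  set y := (A.sort (· ≤ ·)).getD (m - 1) 0
  have hup : y ≤ m - 1 + j := by
    simpa only [getD_sort_insert_Icc_sub_one (show m ≤ m - 1 + j by omega)] using hmaj (m - 1)
  have hlow : m ≤ y := by have := hlow (m - 1) (by omega); omega
  rw [mem_hookFam, eq_insert_Icc_of_subset hA hbase hlow (sort_getD_mem (by omega))]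
  exact ⟨y - (m - 1), by omega, by congr 1; omega⟩

lemma famMult_hookFam_of_le {c x : ℕ} (hx1 : 1 ≤ x) (hxm : x ≤ m - 1) :
    famMult (hookFam m c) x = c := by
  rw [famMult, filter_true_of_mem, card_hookFam]
  intro S hS
  obtain ⟨j, -, rfl⟩ := mem_hookFam.1 hS
  exact mem_insert_of_mem (mem_Icc.2 ⟨hx1, hxm⟩)

lemma famMult_hookFam_add {c j : ℕ} (hj : 1 ≤ j) :
    famMult (hookFam m c) (m - 1 + j) = if j ≤ c then 1 else 0 := by
  have : (hookFam m c).filter (fun S => m - 1 + j ∈ S) =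
      if j ≤ c then {insert (m - 1 + j) (Icc 1 (m - 1))} else ∅ := by
    ext S
    rw [mem_filter, mem_hookFam]
    split_ifs with hjc
    · constructor
      · rintro ⟨⟨i, hi, rfl⟩, hmem⟩
        simp only [mem_insert, mem_Icc] at hmem
        rw [mem_singleton, show i = j by omega]
      · rintro h
        rw [mem_singleton] at h
        exact ⟨⟨j, ⟨hj, hjc⟩, h⟩, h ▸ mem_insert_self _ _⟩
    · simp only [notMem_empty, iff_false, not_and]
      rintro ⟨i, hi, rfl⟩ hmem
      simp only [mem_insert, mem_Icc] at hmem
      omega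
  rw [famMult, this]
  split_ifs <;> rfl

end Hook

section Conjugate

variable {k : ℕ} {nu : ℕ → ℕ}

lemma card_filter_Icc_le (c t : ℕ) : #{j ∈ Icc 1 t | j ≤ c} = min c t := by
  rw [show {j ∈ Icc 1 t | j ≤ c} = Icc 1 (min c t) by ext; simp only [mem_filter, mem_Icc]; omega,
    Nat.card_Icc, Nat.add_sub_cancel]

lemma le_nuConj_iff (hmono : ∀ i j : ℕ, 1 ≤ i → i ≤ j → nu j ≤ nu i)
    (hzero : ∀ i : ℕ, k < i → nu i = 0) {i j : ℕ} (hi : 1 ≤ i) (hj : 1 ≤ j) :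
    j ≤ nuConj k nu i ↔ i ≤ nu j := by
  constructor
  · intro h
    by_contra! hlt
    have hsub : {t ∈ Icc 1 k | i ≤ nu t} ⊆ Icc 1 (j - 1) := fun t ht => by
      simp only [mem_filter, mem_Icc] at ht ⊢
      by_contra! htj
      have := hmono j t hj (by omega)
      omega
    have := card_le_card hsub
    rw [Nat.card_Icc] at this
    rw [nuConj] at h
    omega
  · intro h
    have hjk : j ≤ k := by
      by_contra! hjk
      have := hzero j hjk
      omega
    have hsub : Icc 1 j ⊆ {t ∈ Icc 1 k | i ≤ nu t} := fun t ht => by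
      simp only [mem_filter, mem_Icc] at ht ⊢
      exact ⟨⟨ht.1, ht.2.trans hjk⟩, h.trans (hmono t j ht.1 ht.2)⟩
    have := card_le_card hsub
    rw [Nat.card_Icc] at this
    rw [nuConj]
    omega

lemma card_filter_le_nuConj (hmono : ∀ i j : ℕ, 1 ≤ i → i ≤ j → nu j ≤ nu i)
    (hzero : ∀ i : ℕ, k < i → nu i = 0) {j : ℕ} (hj : 1 ≤ j) :
    #{i ∈ Icc 1 (nu 1) | j ≤ nuConj k nu i} = nu j := by
  rw [filter_congr fun i hi => le_nuConj_iff hmono hzero (mem_Icc.1 hi).1 hj,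
    card_filter_Icc_le, min_eq_left (hmono 1 j le_rfl hj)]

lemma sum_min_nuConj (hmono : ∀ i j : ℕ, 1 ≤ i → i ≤ j → nu j ≤ nu i)
    (hzero : ∀ i : ℕ, k < i → nu i = 0) (t : ℕ) :
    ∑ i ∈ Icc 1 (nu 1), min (nuConj k nu i) t = ∑ j ∈ Icc 1 t, nu j := by
  calc ∑ i ∈ Icc 1 (nu 1), min (nuConj k nu i) t
      = ∑ i ∈ Icc 1 (nu 1), #{j ∈ Icc 1 t | i ≤ nu j} := sum_congr rfl fun i hi => by
        rw [← card_filter_Icc_le, filter_congr fun j hj =>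
          le_nuConj_iff hmono hzero (mem_Icc.1 hi).1 (mem_Icc.1 hj).1]
    _ = ∑ j ∈ Icc 1 t, #{i ∈ Icc 1 (nu 1) | i ≤ nu j} :=
        sum_card_bipartiteAbove_eq_sum_card_bipartiteBelow (fun i j => i ≤ nu j)
    _ = ∑ j ∈ Icc 1 t, nu j := sum_congr rfl fun j hj => by
        rw [card_filter_Icc_le, min_eq_left (hmono 1 j le_rfl (mem_Icc.1 hj).1)]

lemma sum_nuConj (hmono : ∀ i j : ℕ, 1 ≤ i → i ≤ j → nu j ≤ nu i)
    (hzero : ∀ i : ℕ, k < i → nu i = 0) :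
    ∑ i ∈ Icc 1 (nu 1), nuConj k nu i = ∑ j ∈ Icc 1 k, nu j := by
  rw [← sum_min_nuConj hmono hzero k]
  refine sum_congr rfl fun i _ => (min_eq_left ?_).symm
  simpa [nuConj] using card_filter_le (Icc 1 k) (fun j => i ≤ nu j)

lemma le_sum_Icc_of_forall_gt_eq_zero (hzero : ∀ i : ℕ, k < i → nu i = 0) {j : ℕ} (hj : 1 ≤ j) :
    nu j ≤ ∑ i ∈ Icc 1 k, nu i := by
  rcases le_or_gt j k with hjk | hjk
  · exact single_le_sum (fun _ _ => Nat.zero_le _) (mem_Icc.2 ⟨hj, hjk⟩)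
  · simp [hzero j hjk]

end Conjugate

abbrev hookTuple (m k : ℕ) (nu : ℕ → ℕ) (i : ℕ) : Finset (Finset ℕ) := hookFam m (nuConj k nu i)

section HookTuple

variable {m k : ℕ} {nu : ℕ → ℕ}

lemma tupMultIcc_hookFam_of_le (l : ℕ) (c : ℕ → ℕ) {x : ℕ} (hx1 : 1 ≤ x) (hxm : x ≤ m - 1) :
    tupMultIcc l (fun i => hookFam m (c i)) x = ∑ i ∈ Icc 1 l, c i :=
  sum_congr rfl fun _ _ => famMult_hookFam_of_le hx1 hxm

lemma tupMultIcc_hookFam_add (l : ℕ) (c : ℕ → ℕ) {j : ℕ} (hj : 1 ≤ j) :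
    tupMultIcc l (fun i => hookFam m (c i)) (m - 1 + j) = #{i ∈ Icc 1 l | j ≤ c i} := by
  rw [card_filter]
  exact sum_congr rfl fun _ _ => famMult_hookFam_add hj

lemma tupMultIcc_hookTuple_of_le (hmono : ∀ i j : ℕ, 1 ≤ i → i ≤ j → nu j ≤ nu i)
    (hzero : ∀ i : ℕ, k < i → nu i = 0) {x : ℕ} (hx1 : 1 ≤ x) (hxm : x ≤ m - 1) :
    tupMultIcc (nu 1) (hookTuple m k nu) x = ∑ j ∈ Icc 1 k, nu j := by
  rw [tupMultIcc_hookFam_of_le _ _ hx1 hxm, sum_nuConj hmono hzero]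

lemma tupMultIcc_hookTuple_add (hmono : ∀ i j : ℕ, 1 ≤ i → i ≤ j → nu j ≤ nu i)
    (hzero : ∀ i : ℕ, k < i → nu i = 0) {j : ℕ} (hj : 1 ≤ j) :
    tupMultIcc (nu 1) (hookTuple m k nu) (m - 1 + j) = nu j := by
  rw [tupMultIcc_hookFam_add _ _ hj, card_filter_le_nuConj hmono hzero hj]

lemma typeDefined_hookTuple (hmono : ∀ i j : ℕ, 1 ≤ i → i ≤ j → nu j ≤ nu i)
    (hzero : ∀ i : ℕ, k < i → nu i = 0) :
    TypeDefined (tupMultIcc (nu 1) (hookTuple m k nu)) := by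
  have hF : ∀ x, 1 ≤ x → tupMultIcc (nu 1) (hookTuple m k nu) x =
      if x ≤ m - 1 then ∑ j ∈ Icc 1 k, nu j else nu (x - (m - 1)) := fun x hx => by
    split_ifs with hxm
    · exact tupMultIcc_hookTuple_of_le hmono hzero hx hxm
    · obtain ⟨j, rfl⟩ : ∃ j, x = m - 1 + j := ⟨x - (m - 1), by omega⟩
      rw [tupMultIcc_hookTuple_add hmono hzero (by omega), Nat.add_sub_cancel_left]
  intro i j hi hij
  rw [hF i hi, hF j (hi.trans hij)]
  split_ifs
  · exact le_rfl
  · omega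
  · exact le_sum_Icc_of_forall_gt_eq_zero hzero (by omega)
  · exact hmono _ _ (by omega) (by omega)

end HookTuple

section Competitors

variable {m : ℕ}

lemma tupMultIcc_le_sum_card (l : ℕ) (R : ℕ → Finset (Finset ℕ)) (x : ℕ) :
    tupMultIcc l R x ≤ ∑ i ∈ Icc 1 l, #(R i) :=
  sum_le_sum fun _ _ => card_filter_le _ _

lemma mem_of_tupMultIcc_eq_sum_card {l : ℕ} {R : ℕ → Finset (Finset ℕ)} {x : ℕ}
    (h : tupMultIcc l R x = ∑ i ∈ Icc 1 l, #(R i)) {i : ℕ} (hi : i ∈ Icc 1 l) {S : Finset ℕ}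
    (hS : S ∈ R i) : x ∈ S :=
  card_filter_eq_iff.1 ((sum_eq_sum_iff_of_le fun _ _ => card_filter_le _ _).1 h i hi) S hS

lemma sum_famMult_le_min {P : Finset (Finset ℕ)} (hP : ∀ S ∈ P, #S = m ∧ Icc 1 (m - 1) ⊆ S)
    {I : Finset ℕ} (hI : ∀ x ∈ I, m ≤ x) : ∑ x ∈ I, famMult P x ≤ min #P #I := by
  have hinter : ∀ S ∈ P, #{x ∈ I | x ∈ S} ≤ 1 := fun S hS => card_le_one.2 fun x hx y hy => by
    rw [mem_filter] at hx hy
    have hy' := eq_insert_Icc_of_subset (hP S hS).1 (hP S hS).2 (hI x hx.1) hx.2 ▸ hy.2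
    have := hI y hy.1
    simp only [mem_insert, mem_Icc] at hy'
    omega
  have hmult : ∀ x ∈ I, famMult P x ≤ 1 := fun x hx => card_le_one.2 fun S hS T hT => by
    rw [mem_filter] at hS hT
    rw [eq_insert_Icc_of_subset (hP S hS.1).1 (hP S hS.1).2 (hI x hx) hS.2,
      eq_insert_Icc_of_subset (hP T hT.1).1 (hP T hT.1).2 (hI x hx) hT.2]
  refine le_min ?_ ?_
  · calc ∑ x ∈ I, famMult P x = ∑ S ∈ P, #{x ∈ I | x ∈ S} :=
          sum_card_bipartiteAbove_eq_sum_card_bipartiteBelow (fun x S => x ∈ S)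
      _ ≤ #P := by simpa using sum_le_sum hinter
  · simpa using sum_le_sum hmult

lemma sum_tupMultIcc_add_le {l : ℕ} {R : ℕ → Finset (Finset ℕ)}
    (hR : ∀ i ∈ Icc 1 l, ∀ S ∈ R i, #S = m ∧ Icc 1 (m - 1) ⊆ S) (t : ℕ) :
    ∑ s ∈ Icc 1 t, tupMultIcc l R (m - 1 + s) ≤ ∑ i ∈ Icc 1 l, min #(R i) t := by
  rw [← sum_image (f := tupMultIcc l R) (g := (m - 1 + ·)) fun _ _ _ _ => Nat.add_left_cancel,
    image_add_left_Icc]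
  simp only [tupMultIcc]
  rw [sum_comm]
  refine sum_le_sum fun i hi => ?_
  simpa using sum_famMult_le_min (hR i hi) (I := Icc (m - 1 + 1) (m - 1 + t))
    (fun x hx => by rw [mem_Icc] at hx; omega)

end Competitors

lemma le_of_sum_Icc_le_of_eq {f g : ℕ → ℕ} {t : ℕ} (ht : 1 ≤ t)
    (hsum : ∑ s ∈ Icc 1 t, f s ≤ ∑ s ∈ Icc 1 t, g s) (heq : ∀ s, 1 ≤ s → s < t → f s = g s) :
    f t ≤ g t := by
  obtain ⟨t, rfl⟩ := Nat.exists_eq_add_of_le' ht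
  have hprefix : ∑ s ∈ Icc 1 t, f s = ∑ s ∈ Icc 1 t, g s :=
    sum_congr rfl fun s hs => heq s (mem_Icc.1 hs).1 (by rw [mem_Icc] at hs; omega)
  rw [sum_Icc_succ_top (by omega), sum_Icc_succ_top (by omega), hprefix] at hsum
  omega

lemma forall_eq_or_exists_lt_of_agree_imp_le {f g : ℕ → ℕ}
    (h : ∀ j, 1 ≤ j → (∀ i, 1 ≤ i → i < j → f i = g i) → f j ≤ g j) :
    (∀ i, 1 ≤ i → f i = g i) ∨ ∃ j, 1 ≤ j ∧ f j < g j ∧ ∀ i, 1 ≤ i → i < j → f i = g i := by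
  classical
  by_cases hall : ∀ i, 1 ≤ i → f i = g i
  · exact Or.inl hall
  push Not at hall
  obtain ⟨hj, hne⟩ := Nat.find_spec hall
  have hagree : ∀ i, 1 ≤ i → i < Nat.find hall → f i = g i := fun i hi hlt => by
    by_contra hne
    exact Nat.find_min hall hlt ⟨hi, hne⟩
  exact Or.inr ⟨_, hj, lt_of_le_of_ne (h _ hj hagree) hne, hagree⟩

lemma tupMultIcc_le_hookTuple_of_agree {m k : ℕ} {nu : ℕ → ℕ}
    (hmono : ∀ i j : ℕ, 1 ≤ i → i ≤ j → nu j ≤ nu i) (hzero : ∀ i : ℕ, k < i → nu i = 0)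
    {R : ℕ → Finset (Finset ℕ)}
    (hR : ∀ i : ℕ, 1 ≤ i → i ≤ nu 1 → IsSetFamily m (nuConj k nu i) (R i)) {j : ℕ} (hj : 1 ≤ j)
    (hagree : ∀ i, 1 ≤ i → i < j →
      tupMultIcc (nu 1) R i = tupMultIcc (nu 1) (hookTuple m k nu) i) :
    tupMultIcc (nu 1) R j ≤ tupMultIcc (nu 1) (hookTuple m k nu) j := by
  have hcard : ∀ i ∈ Icc 1 (nu 1), #(R i) = nuConj k nu i := fun i hi =>
    (hR i (mem_Icc.1 hi).1 (mem_Icc.1 hi).2).1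
  have htotal : ∑ i ∈ Icc 1 (nu 1), #(R i) = ∑ j ∈ Icc 1 k, nu j := by
    rw [sum_congr rfl hcard, sum_nuConj hmono hzero]
  rcases le_or_gt j (m - 1) with hjm | hjm
  · rw [tupMultIcc_hookTuple_of_le hmono hzero hj hjm, ← htotal]
    exact tupMultIcc_le_sum_card _ _ _
  -- all multiplicities below `m` are maximal, so every set contains `{1, …, m - 1}`
  have hbase : ∀ i ∈ Icc 1 (nu 1), ∀ S ∈ R i, #S = m ∧ Icc 1 (m - 1) ⊆ S :=
    fun i hi S hS => ⟨((hR i (mem_Icc.1 hi).1 (mem_Icc.1 hi).2).2 S hS).1, fun x hx => by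
      rw [mem_Icc] at hx
      refine mem_of_tupMultIcc_eq_sum_card ?_ hi hS
      rw [hagree x hx.1 (by omega), tupMultIcc_hookTuple_of_le hmono hzero hx.1 hx.2, htotal]⟩
  obtain ⟨t, rfl⟩ : ∃ t, j = m - 1 + t := ⟨j - (m - 1), by omega⟩
  have hsum := sum_tupMultIcc_add_le hbase t
  rw [sum_congr rfl fun i hi => congrArg (min · t) (hcard i hi), sum_min_nuConj hmono hzero] at hsum
  rw [tupMultIcc_hookTuple_add hmono hzero (by omega)]
  refine le_of_sum_Icc_le_of_eq (f := fun s => tupMultIcc (nu 1) R (m - 1 + s)) (by omega) hsum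
    fun s hs hst => ?_
  rw [hagree _ (by omega) (by omega), tupMultIcc_hookTuple_add hmono hzero hs]

theorem stmt_18_general (m n k : ℕ) (hm : 1 ≤ m) (nu : ℕ → ℕ)
    (hmono : ∀ i j : ℕ, 1 ≤ i → i ≤ j → nu j ≤ nu i)
    (hzero : ∀ i : ℕ, k < i → nu i = 0)
    (hsum : (∑ i ∈ Finset.Icc 1 k, nu i) = n) :
    (∀ i : ℕ, 1 ≤ i → i ≤ nu 1 →
      IsSetFamily m (nuConj k nu i) (hookFam m (nuConj k nu i)) ∧
      ClosedFam m (hookFam m (nuConj k nu i))) ∧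
    TypeDefined (tupMultIcc (nu 1) fun i => hookFam m (nuConj k nu i)) ∧
    (∀ x : ℕ, 1 ≤ x → x ≤ m - 1 →
      (tupMultIcc (nu 1) fun i => hookFam m (nuConj k nu i)) x = n) ∧
    (∀ j : ℕ, 1 ≤ j →
      (tupMultIcc (nu 1) fun i => hookFam m (nuConj k nu i)) (m - 1 + j) = nu j) ∧
    (∀ R : ℕ → Finset (Finset ℕ),
      (∀ i : ℕ, 1 ≤ i → i ≤ nu 1 → IsSetFamily m (nuConj k nu i) (R i)) →
      TypeDefined (tupMultIcc (nu 1) R) →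
      ((∀ i : ℕ, 1 ≤ i →
          tupMultIcc (nu 1) R i = (tupMultIcc (nu 1) fun i => hookFam m (nuConj k nu i)) i) ∨
        ∃ j : ℕ, 1 ≤ j ∧
          tupMultIcc (nu 1) R j < (tupMultIcc (nu 1) fun i => hookFam m (nuConj k nu i)) j ∧
          ∀ i : ℕ, 1 ≤ i → i < j →
            tupMultIcc (nu 1) R i
              = (tupMultIcc (nu 1) fun i => hookFam m (nuConj k nu i)) i)) := by
  subst hsum
  exact ⟨fun _ _ _ => ⟨isSetFamily_hookFam hm _, closedFam_hookFam hm _⟩,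
    typeDefined_hookTuple hmono hzero,
    fun _ hx1 hxm => tupMultIcc_hookTuple_of_le hmono hzero hx1 hxm,
    fun _ hj => tupMultIcc_hookTuple_add hmono hzero hj,
    fun _ hR _ => forall_eq_or_exists_lt_of_agree_imp_le fun _ hj hagree =>
      tupMultIcc_le_hookTuple_of_agree hmono hzero hR hj hagree⟩

/-- Let `ν` be a partition of `n ≥ 1` with largest part `ℓ = ν_1` and
exactly `k` nonzero parts, `m ≥ 1`.  With `P_i = hookFam m (ν'_i)` for `1 ≤ i ≤ ℓ`,
`(P_1,…,P_ℓ)` is a closed set family tuple, each `P_i` of shape `(m^{ν'_i})`; its type `λ`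
is defined with conjugate `λ' = (n^{m-1}, ν_1, …, ν_k)`: the total number of sets
containing `x` is `n` for `1 ≤ x ≤ m-1` and is `ν_j` for `x = m-1+j`, `j ≥ 1`; and the
conjugate of the defined type of any set family tuple of the same shapes is
lexicographically at most `λ'`. -/
theorem stmt_18 (m n k : ℕ) (hm : 1 ≤ m) (hn : 1 ≤ n) (nu : ℕ → ℕ)
    (hmono : ∀ i j : ℕ, 1 ≤ i → i ≤ j → nu j ≤ nu i)
    (hpos : ∀ i : ℕ, 1 ≤ i → i ≤ k → 0 < nu i)
    (hzero : ∀ i : ℕ, k < i → nu i = 0)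
    (hsum : (∑ i ∈ Finset.Icc 1 k, nu i) = n) :
    (∀ i : ℕ, 1 ≤ i → i ≤ nu 1 →
      IsSetFamily m (nuConj k nu i) (hookFam m (nuConj k nu i)) ∧
      ClosedFam m (hookFam m (nuConj k nu i))) ∧
    TypeDefined (tupMultIcc (nu 1) fun i => hookFam m (nuConj k nu i)) ∧
    (∀ x : ℕ, 1 ≤ x → x ≤ m - 1 →
      (tupMultIcc (nu 1) fun i => hookFam m (nuConj k nu i)) x = n) ∧
    (∀ j : ℕ, 1 ≤ j →
      (tupMultIcc (nu 1) fun i => hookFam m (nuConj k nu i)) (m - 1 + j) = nu j) ∧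
    (∀ R : ℕ → Finset (Finset ℕ),
      (∀ i : ℕ, 1 ≤ i → i ≤ nu 1 → IsSetFamily m (nuConj k nu i) (R i)) →
      TypeDefined (tupMultIcc (nu 1) R) →
      ((∀ i : ℕ, 1 ≤ i →
          tupMultIcc (nu 1) R i = (tupMultIcc (nu 1) fun i => hookFam m (nuConj k nu i)) i) ∨
        ∃ j : ℕ, 1 ≤ j ∧
          tupMultIcc (nu 1) R j < (tupMultIcc (nu 1) fun i => hookFam m (nuConj k nu i)) j ∧
          ∀ i : ℕ, 1 ≤ i → i < j →
            tupMultIcc (nu 1) R i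
              = (tupMultIcc (nu 1) fun i => hookFam m (nuConj k nu i)) i)) :=
  stmt_18_general m n k hm nu hmono hzero hsum
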